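/- For any graph G of order n ≥ 5, ⌊λ(G)/(n−2)⌋ ≤ μ_{n−2}(G) ≤ ⌈λ(G)/(n−2)⌉, where λ(G) is the edge-connectivity of G. -/

import Mathlib

open SimpleGraph

/-- A pendant `S`-Steiner tree in `G`: a subgraph `T` of `G` that is a tree,
contains `S`, and in which every vertex of `S` has degree 1. -/
def IsPendantSTree {V : Type*} (G : SimpleGraph V) (S : Set V) (T : G.Subgraph) : Prop :=
  S ⊆ T.verts ∧ T.coe.IsTree ∧ ∀ v ∈ S, (T.neighborSet v).ncard = 1

/-- A family of pairwise internally disjoint pendant `S`-Steiner trees. -/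
def IsIntDisjointFamily {V : Type*} (G : SimpleGraph V) (S : Set V)
    (F : Finset G.Subgraph) : Prop :=
  (∀ T ∈ F, IsPendantSTree G S T) ∧
  ∀ T ∈ F, ∀ T' ∈ F, T ≠ T' →
    T.edgeSet ∩ T'.edgeSet = ∅ ∧ T.verts ∩ T'.verts = S

/-- A family of pairwise edge-disjoint pendant `S`-Steiner trees. -/
def IsEdgeDisjointFamily {V : Type*} (G : SimpleGraph V) (S : Set V)
    (F : Finset G.Subgraph) : Prop :=
  (∀ T ∈ F, IsPendantSTree G S T) ∧
  ∀ T ∈ F, ∀ T' ∈ F, T ≠ T' → T.edgeSet ∩ T'.edgeSet = ∅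

/-- `τ(S)`: the maximum number of pairwise internally disjoint pendant `S`-Steiner trees. -/
noncomputable def tauLocal {V : Type*} (G : SimpleGraph V) (S : Set V) : ℕ :=
  sSup {n | ∃ F : Finset G.Subgraph, F.card = n ∧ IsIntDisjointFamily G S F}

/-- Pendant-tree `k`-connectivity `τ_k(G)`. -/
noncomputable def tau {V : Type*} (G : SimpleGraph V) (k : ℕ) : ℕ :=
  sInf {n | ∃ S : Finset V, S.card = k ∧ tauLocal G ↑S = n}

/-- `μ(S)`: the maximum number of pairwise edge-disjoint pendant `S`-Steiner trees. -/
noncomputable def muLocal {V : Type*} (G : SimpleGraph V) (S : Set V) : ℕ :=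
  sSup {n | ∃ F : Finset G.Subgraph, F.card = n ∧ IsEdgeDisjointFamily G S F}

/-- Pendant-tree `k`-edge-connectivity `μ_k(G)`. -/
noncomputable def mu {V : Type*} (G : SimpleGraph V) (k : ℕ) : ℕ :=
  sInf {n | ∃ S : Finset V, S.card = k ∧ muLocal G ↑S = n}

/-- Vertex connectivity (cut version): the least size of a vertex set whose removal
disconnects the graph or leaves at most one vertex. -/
noncomputable def kappa {V : Type*} [Fintype V] (G : SimpleGraph V) : ℕ :=
  sInf {n | ∃ S : Finset V, S.card = n ∧
    (¬ ((⊤ : G.Subgraph).deleteVerts ↑S).coe.Connected ∨ Fintype.card V - S.card ≤ 1)}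

/-- Edge connectivity: the least size of an edge set whose removal disconnects the graph. -/
noncomputable def edgeConn {V : Type*} (G : SimpleGraph V) : ℕ :=
  sInf {n | ∃ F : Finset (Sym2 V), F.card = n ∧ ↑F ⊆ G.edgeSet ∧
    ¬ (G.deleteEdges ↑F).Connected}

/-- Edges of `G` with one endpoint in `S` and the other outside `S`. -/
def crossEdges {V : Type*} (G : SimpleGraph V) (S : Set V) : Set (Sym2 V) :=
  {e | e ∈ G.edgeSet ∧ ∃ u v, e = s(u, v) ∧ u ∈ S ∧ v ∉ S}

/-!
With `k = n - 2`, a set `S` of size `k` misses exactly two vertices `a, b`. Since `|S| ≥ 3`, no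
two vertices of `S` are adjacent in a pendant `S`-tree (they would form the whole tree), so every
`v ∈ S` hangs on `a` or `b`; edge-disjoint trees thus use distinct edges from `v` to `{a, b}`,
giving `μ(S) ≤ 2`, and `μ(S) ≤ 1` when `v` is not adjacent to `a`.

Lower bound: if `λ ≥ n - 2` then `λ ≤ δ ≤ n - 1` gives `⌊λ/(n-2)⌋ ≤ 1`, and `δ ≥ n - 2` means
every vertex has at most one non-neighbour, which suffices to hang `S` on the edge `ab` or on a
star at `a`. Upper bound: a disconnected `G` has `λ = 0` and some `S` meeting two components,
so `μ = 0`; a connected `G ≠ K_n` has `λ ≥ 1` and `μ ≤ 1`; and `λ(K_n) = n - 1` matches `μ ≤ 2`.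
-/

namespace SimpleGraph

variable {α : Type*} {K : SimpleGraph α}

theorem Walk.IsCycle.not_subsingleton_neighborSet {u : α} {c : K.Walk u u} (hc : c.IsCycle) :
    ¬(K.neighborSet u).Subsingleton := fun h ↦
  hc.snd_ne_penultimate (h (c.adj_snd hc.not_nil) (c.adj_penultimate hc.not_nil).symm)

/-- The start, second and penultimate vertices of a cycle are distinct, and each has two distinct
neighbours, so they cannot all lie in `{a, b}`. -/
theorem isAcyclic_of_neighborSet_subsingleton (a b : α)
    (h : ∀ x, x ≠ a → x ≠ b → (K.neighborSet x).Subsingleton) : K.IsAcyclic := by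
  classical
  intro u c hc
  have hab : ∀ w ∈ c.support, w = a ∨ w = b := fun w hw ↦ by
    by_contra! hw'
    exact (hc.rotate hw).not_subsingleton_neighborSet (h w hw'.1 hw'.2)
  have hu := hab u c.start_mem_support
  have hsnd := hab _ (c.getVert_mem_support 1)
  have hpen := hab _ (c.getVert_mem_support (c.length - 1))
  have h₁ := (c.adj_snd hc.not_nil).ne
  have h₂ := (c.adj_penultimate hc.not_nil).ne
  have h₃ := hc.snd_ne_penultimate
  grind

end SimpleGraph

theorem SimpleGraph.Subgraph.Connected.of_le_of_forall_exists_adj {V : Type*} {G : SimpleGraph V}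
    {H T : G.Subgraph} (hH : H.Connected) (hle : H ≤ T)
    (h : ∀ v ∈ T.verts, v ∉ H.verts → ∃ w ∈ H.verts, T.Adj v w) : T.Connected := by
  obtain ⟨r, hr⟩ := hH.nonempty
  have hreach : ∀ v (hv : v ∈ H.verts), T.coe.Reachable ⟨v, hle.1 hv⟩ ⟨r, hle.1 hr⟩ :=
    fun v hv ↦ (hH.preconnected ⟨v, hv⟩ ⟨r, hr⟩).map (Subgraph.inclusion hle)
  rw [Subgraph.connected_iff', connected_iff_exists_forall_reachable]
  refine ⟨⟨r, hle.1 hr⟩, fun ⟨v, hv⟩ ↦ ?_⟩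
  by_cases hvH : v ∈ H.verts
  · exact (hreach v hvH).symm
  · obtain ⟨w, hw, hvw⟩ := h v hv hvH
    exact ((Adj.reachable (G := T.coe) (u := ⟨v, hv⟩) (v := ⟨w, hle.1 hw⟩) hvw).trans
      (hreach w hw)).symm

section attachLeaves

variable {V : Type*} {G : SimpleGraph V}

@[simps]
def attachLeaves (H : G.Subgraph) (S : Set V) (p : V → V) : G.Subgraph where
  verts := H.verts ∪ S ∪ p '' S
  Adj x y := H.Adj x y ∨ G.Adj x y ∧ (x ∈ S ∧ y = p x ∨ y ∈ S ∧ x = p y)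
  adj_sub := by
    rintro x y (h | ⟨h, -⟩)
    exacts [H.adj_sub h, h]
  edge_vert := by
    rintro x y (h | ⟨-, ⟨hx, -⟩ | ⟨hy, rfl⟩⟩)
    · exact Or.inl (Or.inl (H.edge_vert h))
    · exact Or.inl (Or.inr hx)
    · exact Or.inr ⟨y, hy, rfl⟩
  symm := ⟨fun x y ↦ by
    rintro (h | ⟨h, h'⟩)
    exacts [Or.inl h.symm, Or.inr ⟨h.symm, h'.symm⟩]⟩

variable {H : G.Subgraph} {S : Set V} {p : V → V}

theorem le_attachLeaves : H ≤ attachLeaves H S p :=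
  ⟨fun _ hv ↦ by simp [hv], fun _ _ h ↦ by simp [h]⟩

theorem attachLeaves_adj_of_notMem (hp : ∀ s ∈ S, p s ∈ H.verts) {x y : V}
    (hx : x ∉ H.verts) (hxy : (attachLeaves H S p).Adj x y) : x ∈ S ∧ y = p x := by
  rcases attachLeaves_adj .. ▸ hxy with h | ⟨-, h | ⟨hy, rfl⟩⟩
  · exact absurd (H.edge_vert h) hx
  · exact h
  · exact absurd (hp y hy) hx

theorem isPendantSTree_attachLeaves {a b : V} (hH : H.Connected) (hHab : H.verts ⊆ {a, b})
    (hSH : Disjoint S H.verts) (hp : ∀ s ∈ S, p s ∈ H.verts ∧ G.Adj s (p s)) :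
    IsPendantSTree G S (attachLeaves H S p) := by
  have hadj {x y : V} (hx : x ∉ H.verts) (hxy : (attachLeaves H S p).Adj x y) :=
    attachLeaves_adj_of_notMem (fun s hs ↦ (hp s hs).1) hx hxy
  have hleaf {s : V} (hs : s ∈ S) : (attachLeaves H S p).Adj s (p s) :=
    Or.inr ⟨(hp s hs).2, Or.inl ⟨hs, rfl⟩⟩
  refine ⟨fun s hs ↦ by simp [hs], ⟨?_, ?_⟩, fun s hs ↦ ?_⟩
  · refine (hH.of_le_of_forall_exists_adj le_attachLeaves fun v hv hvH ↦ ?_).coe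
    have hvS : v ∈ S := by
      rcases attachLeaves_verts .. ▸ hv with (hv | hv) | ⟨s, hs, rfl⟩
      exacts [absurd hv hvH, hv, absurd (hp s hs).1 hvH]
    exact ⟨p v, (hp v hvS).1, hleaf hvS⟩
  · refine .embedding (attachLeaves H S p).coeEmbeddingSpanningCoe
      (isAcyclic_of_neighborSet_subsingleton a b fun x hxa hxb y hy z hz ↦ ?_)
    have hx : x ∉ H.verts := fun h ↦ by rcases hHab h with rfl | rfl <;> simp_all
    exact (hadj hx hy).2.trans (hadj hx hz).2.symm
  · have hs' : s ∉ H.verts := hSH.notMem_of_mem_left hs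
    rw [Set.ncard_eq_one]
    exact ⟨p s, Set.eq_singleton_iff_unique_mem.2 ⟨hleaf hs, fun y hy ↦ (hadj hs' hy).2⟩⟩

end attachLeaves

section pendant

variable {V : Type*} {G : SimpleGraph V} {S : Set V} {T : G.Subgraph} {u v w : V}

namespace IsPendantSTree

theorem exists_adj (hT : IsPendantSTree G S T) (hv : v ∈ S) : ∃ w, T.Adj v w :=
  Set.nonempty_of_ncard_ne_zero (s := T.neighborSet v) (by rw [hT.2.2 v hv]; exact one_ne_zero)

theorem subsingleton_neighborSet (hT : IsPendantSTree G S T) (hv : v ∈ S) :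
    (T.neighborSet v).Subsingleton := by
  obtain ⟨x, hx⟩ := Set.ncard_eq_one.1 (hT.2.2 v hv)
  exact hx ▸ Set.subsingleton_singleton

theorem reachable (hT : IsPendantSTree G S T) (hu : u ∈ S) (hv : v ∈ S) : G.Reachable u v :=
  (hT.2.1.connected.preconnected ⟨u, hT.1 hu⟩ ⟨v, hT.1 hv⟩).map T.hom

/-- If the unique neighbour `w` of `v` were in `S`, then `v` and `w` would be each other's only
neighbours, so the tree would consist of the single edge `vw` and miss a third vertex of `S`. -/
theorem notMem_of_adj (hT : IsPendantSTree G S T) (hS : 2 < S.encard) (hv : v ∈ S)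
    (hvw : T.Adj v w) : w ∉ S := by
  intro hw
  obtain ⟨z, hzS, hz⟩ : ∃ z ∈ S, z ∉ ({v, w} : Set V) := by
    by_contra! h
    have : S.encard ≤ 2 := (Set.encard_le_encard h).trans <|
      (Set.encard_insert_le _ _).trans (by simp [one_add_one_eq_two])
    exact this.not_gt hS
  have hwT : w ∈ T.verts := T.edge_vert hvw.symm
  have hvw' : T.coe.Adj ⟨v, hT.1 hv⟩ ⟨w, hwT⟩ := hvw
  have hclosed : ∀ x ∈ (T.coe.subgraphOfAdj hvw').verts,
      ∀ y, T.coe.Adj x y → (T.coe.subgraphOfAdj hvw').Adj x y := by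
    rintro ⟨x, hx⟩ hxvw ⟨y, hy⟩ hxy
    simp only [subgraphOfAdj_verts, Set.mem_insert_iff, Set.mem_singleton_iff,
      Subtype.mk.injEq] at hxvw
    simp only [subgraphOfAdj_adj, Sym2.eq_iff, Subtype.mk.injEq]
    have hxy : T.Adj x y := hxy
    rcases hxvw with rfl | rfl
    · exact Or.inl ⟨rfl, hT.subsingleton_neighborSet hv hvw hxy⟩
    · exact Or.inr ⟨hT.subsingleton_neighborSet hw hvw.symm hxy, rfl⟩
  have := (hT.2.1.connected.preconnected ⟨v, hT.1 hv⟩ ⟨z, hT.1 hzS⟩).mem_subgraphVerts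
    hclosed (by simp)
  simp_all

end IsPendantSTree

theorem IsEdgeDisjointFamily.card_le_ncard [Finite V] {F : Finset G.Subgraph}
    (hF : IsEdgeDisjointFamily G S F) (hS : 2 < S.encard) (hv : v ∈ S) :
    F.card ≤ (G.neighborSet v \ S).ncard := by
  have hhub : ∀ T ∈ F, ∃ w, T.Adj v w ∧ w ∉ S := fun T hT ↦
    (hF.1 T hT).exists_adj hv |>.imp fun w hw ↦ ⟨hw, (hF.1 T hT).notMem_of_adj hS hv hw⟩
  have : Nonempty V := ⟨v⟩
  choose! hub hhubAdj hhubS using hhub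
  rw [← Set.ncard_coe_finset]
  refine Set.ncard_le_ncard_of_injOn hub (fun T hT ↦ ⟨(hhubAdj T hT).adj_sub, hhubS T hT⟩) ?_
  intro T hT T' hT' h
  by_contra hne
  have hmem : s(v, hub T) ∈ T.edgeSet ∩ T'.edgeSet := ⟨hhubAdj T hT, h ▸ hhubAdj T' hT'⟩
  simp [(hF.2 T hT T' hT' hne)] at hmem

theorem IsEdgeDisjointFamily.card_le_card_sub [Fintype V] {S : Finset V} {F : Finset G.Subgraph}
    (hF : IsEdgeDisjointFamily G S F) (hS : 2 < S.card) : F.card ≤ Fintype.card V - S.card := by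
  obtain ⟨v, hv⟩ := Finset.card_pos.1 (by omega : 0 < S.card)
  calc F.card ≤ (G.neighborSet v \ S).ncard :=
        hF.card_le_ncard (by rw [Set.encard_coe_eq_coe_finsetCard]; exact_mod_cast hS) hv
    _ ≤ (S : Set V)ᶜ.ncard := Set.ncard_le_ncard fun _ h ↦ h.2
    _ = Fintype.card V - S.card := by
      rw [Set.ncard_compl, Nat.card_eq_fintype_card, Set.ncard_coe_finset]

theorem isEdgeDisjointFamily_singleton (hT : IsPendantSTree G S T) :
    IsEdgeDisjointFamily G S {T} := by
  simp [IsEdgeDisjointFamily, hT]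

theorem muLocal_le_of_forall {m : ℕ}
    (h : ∀ F : Finset G.Subgraph, IsEdgeDisjointFamily G S F → F.card ≤ m) : muLocal G S ≤ m :=
  csSup_le ⟨0, ∅, rfl, by simp [IsEdgeDisjointFamily]⟩ fun _ ⟨F, hF, hFS⟩ ↦ hF ▸ h F hFS

theorem one_le_muLocal {m : ℕ} (hT : IsPendantSTree G S T)
    (h : ∀ F : Finset G.Subgraph, IsEdgeDisjointFamily G S F → F.card ≤ m) : 1 ≤ muLocal G S :=
  le_csSup ⟨m, fun _ ⟨F, hF, hFS⟩ ↦ hF ▸ h F hFS⟩ ⟨{T}, rfl, isEdgeDisjointFamily_singleton hT⟩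

theorem muLocal_le_ncard [Finite V] (hS : 2 < S.encard) (hv : v ∈ S) :
    muLocal G S ≤ (G.neighborSet v \ S).ncard :=
  muLocal_le_of_forall fun _ hF ↦ hF.card_le_ncard hS hv

theorem muLocal_eq_zero_of_not_reachable (hu : u ∈ S) (hv : v ∈ S) (h : ¬G.Reachable u v) :
    muLocal G S = 0 := by
  refine Nat.le_zero.1 (muLocal_le_of_forall fun F hF ↦ ?_)
  rw [Nat.le_zero, Finset.card_eq_zero]
  exact Finset.eq_empty_of_forall_notMem fun T hT ↦ h ((hF.1 T hT).reachable hu hv)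

theorem mu_card_le_muLocal (S : Finset V) : mu G S.card ≤ muLocal G S :=
  Nat.sInf_le ⟨S, rfl, rfl⟩

theorem le_mu {k m : ℕ} (hk : ∃ S : Finset V, S.card = k)
    (h : ∀ S : Finset V, S.card = k → m ≤ muLocal G S) : m ≤ mu G k := by
  obtain ⟨S, hS⟩ := hk
  exact le_csInf ⟨_, S, hS, rfl⟩ fun _ ⟨S, hS, hn⟩ ↦ hn ▸ h S hS

end pendant

section existence

variable {V : Type*} {G : SimpleGraph V}

/-- When every vertex has at most one non-neighbour, `S` hangs off the edge `ab` if `a ~ b`,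
and otherwise off the star at `a`, whose only non-neighbour is `b`. -/
theorem exists_isPendantSTree {S : Set V} {a b : V} (hab : a ≠ b) (ha : a ∉ S) (hb : b ∉ S)
    (hG : ∀ x y z, x ≠ y → x ≠ z → y ≠ z → G.Adj x y ∨ G.Adj x z) :
    ∃ T, IsPendantSTree G S T := by
  classical
  have hSab : ∀ s ∈ S, s ≠ a ∧ s ≠ b := fun s hs ↦ ⟨(· ▸ hs |> ha), (· ▸ hs |> hb)⟩
  by_cases hGab : G.Adj a b
  · refine ⟨attachLeaves (G.subgraphOfAdj hGab) S fun s ↦ if G.Adj s a then a else b,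
      isPendantSTree_attachLeaves (Subgraph.subgraphOfAdj_connected hGab) subset_rfl
        (Set.disjoint_left.2 fun s hs ↦ by simpa using hSab s hs) fun s hs ↦ ?_⟩
    obtain ⟨hsa, hsb⟩ := hSab s hs
    split_ifs with hsa'
    · simpa using hsa'
    · simpa using (hG s a b hsa hsb hab).resolve_left hsa'
  · refine ⟨attachLeaves (G.singletonSubgraph a) S fun _ ↦ a,
      isPendantSTree_attachLeaves Subgraph.singletonSubgraph_connected (a := a) (b := b) (by simp)
        (Set.disjoint_left.2 fun s hs ↦ by simpa using (hSab s hs).1) fun s hs ↦ ?_⟩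
    obtain ⟨hsa, hsb⟩ := hSab s hs
    exact ⟨rfl, ((hG a b s hab hsa.symm hsb.symm).resolve_left hGab).symm⟩

theorem adj_or_adj_of_forall_card_sub_two_le_degree [Fintype V] [DecidableRel G.Adj]
    (hdeg : ∀ x, Fintype.card V - 2 ≤ G.degree x) {x y z : V} (hxy : x ≠ y) (hxz : x ≠ z)
    (hyz : y ≠ z) : G.Adj x y ∨ G.Adj x z := by
  classical
  by_contra! h
  have hsub : G.neighborFinset x ⊆ Finset.univ \ {x, y, z} := fun w hw ↦ by
    rw [mem_neighborFinset] at hw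
    simp only [Finset.mem_sdiff, Finset.mem_univ, Finset.mem_insert, Finset.mem_singleton,
      true_and, not_or]
    exact ⟨hw.ne.symm, (· ▸ hw |> h.1), (· ▸ hw |> h.2)⟩
  have hcard : ({x, y, z} : Finset V).card = 3 := by simp [*]
  have := Finset.card_le_card hsub
  rw [Finset.card_sdiff_of_subset (Finset.subset_univ _), Finset.card_univ, hcard,
    card_neighborFinset_eq_degree] at this
  have := hdeg x
  have := Finset.card_le_univ ({x, y, z} : Finset V)
  omega

end existence

section edgeConn

variable {V : Type*} {G : SimpleGraph V}

theorem not_connected_deleteEdges_incidenceSet [Nontrivial V] (v : V) :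
    ¬(G.deleteEdges (G.incidenceSet v)).Connected := fun h ↦ by
  obtain ⟨w, hw⟩ := exists_ne v
  obtain ⟨p⟩ := h.preconnected v w
  have hadj := p.adj_snd (mt Walk.Nil.eq hw.symm)
  rw [deleteEdges_adj] at hadj
  exact hadj.2 ⟨hadj.1, Sym2.mem_mk_left _ _⟩

theorem edgeConn_le_degree [Nontrivial V] (v : V) [Fintype (G.neighborSet v)] :
    edgeConn G ≤ G.degree v := by
  classical
  refine Nat.sInf_le ⟨G.incidenceFinset v, card_incidenceFinset_eq_degree G v, ?_, ?_⟩
  · simpa using G.incidenceSet_subset v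
  · simpa using not_connected_deleteEdges_incidenceSet v

theorem le_edgeConn [Finite V] [Nontrivial V] {m : ℕ}
    (h : ∀ F : Finset (Sym2 V), ↑F ⊆ G.edgeSet → ¬(G.deleteEdges ↑F).Connected → m ≤ F.card) :
    m ≤ edgeConn G := by
  obtain ⟨v⟩ : Nonempty V := inferInstance
  have hcut : ¬(G.deleteEdges ↑(G.incidenceSet v).toFinite.toFinset).Connected := by
    simpa using not_connected_deleteEdges_incidenceSet v
  refine le_csInf ⟨_, _, rfl, by simpa using G.incidenceSet_subset v, hcut⟩ ?_
  rintro _ ⟨F, rfl, hFG, hF⟩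
  exact h F hFG hF

theorem edgeConn_pos [Finite V] [Nontrivial V] (h : G.Connected) : 0 < edgeConn G :=
  le_edgeConn fun F _ hF ↦ Finset.card_pos.2 <| Finset.nonempty_iff_ne_empty.2 fun h0 ↦
    hF (by simpa [h0] using h)

/-- If `uv ∈ F`, the `card V - 2` paths `u w v` are edge-disjoint, so one of them avoids `F`. -/
theorem reachable_top_deleteEdges [Fintype V] {F : Finset (Sym2 V)}
    (hF : F.card + 2 ≤ Fintype.card V) (u v : V) :
    ((⊤ : SimpleGraph V).deleteEdges ↑F).Reachable u v := by
  classical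
  rcases eq_or_ne u v with rfl | huv
  · rfl
  by_cases huvF : s(u, v) ∉ F
  · exact Adj.reachable (by simp [huv, huvF])
  obtain ⟨w, hwu, hwv, huw, hwv'⟩ : ∃ w, w ≠ u ∧ w ≠ v ∧ s(u, w) ∉ F ∧ s(w, v) ∉ F := by
    by_contra! h
    have hle : (Finset.univ \ {u, v}).card ≤ (F.erase s(u, v)).card := by
      refine Finset.card_le_card_of_forall_subsingleton (fun w e ↦ e = s(u, w) ∨ e = s(w, v))
        (fun w hw ↦ ?_) (fun e _ w₁ hw₁ w₂ hw₂ ↦ ?_)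
      · simp only [Finset.mem_sdiff, Finset.mem_univ, Finset.mem_insert, Finset.mem_singleton,
          true_and, not_or] at hw
        by_cases hw' : s(u, w) ∈ F
        · exact ⟨_, Finset.mem_erase.2 ⟨by simp [hw.2, huv], hw'⟩, Or.inl rfl⟩
        · exact ⟨_, Finset.mem_erase.2 ⟨by simp [hw.1, hw.2],
            h w hw.1 hw.2 hw'⟩, Or.inr rfl⟩
      · obtain ⟨hw₁, h₁⟩ := hw₁
        obtain ⟨hw₂, h₂⟩ := hw₂
        simp only [Finset.mem_sdiff, Finset.mem_univ, Finset.mem_insert, Finset.mem_singleton,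
          true_and, not_or] at hw₁ hw₂
        rcases h₁ with rfl | rfl <;> rcases h₂ with h₂ | h₂ <;>
          simp only [Sym2.eq_iff] at h₂ <;> grind
    rw [Finset.card_sdiff_of_subset (Finset.subset_univ _), Finset.card_univ,
      Finset.card_pair huv, Finset.card_erase_of_mem (not_not.1 huvF)] at hle
    have : 0 < F.card := Finset.card_pos.2 ⟨_, not_not.1 huvF⟩
    omega
  exact (Adj.reachable (v := w) (by simp [hwu.symm, huw])).trans
    (Adj.reachable (by simp [hwv, hwv']))

theorem card_sub_one_le_edgeConn_top [Fintype V] :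
    Fintype.card V - 1 ≤ edgeConn (⊤ : SimpleGraph V) := by
  rcases subsingleton_or_nontrivial V with hV | hV
  · simp [Fintype.card_le_one_iff_subsingleton.2 hV]
  refine le_edgeConn fun F _ hF ↦ ?_
  by_contra! hlt
  exact hF ⟨fun u v ↦ reachable_top_deleteEdges (by omega) u v⟩

end edgeConn

section bounds

variable {V : Type*} [Fintype V] {G : SimpleGraph V}

theorem exists_finset_card_eq_card_sub_two : ∃ S : Finset V, S.card = Fintype.card V - 2 :=
  (Finset.univ.exists_subset_card_eq (by simp)).imp fun _ h ↦ h.2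

theorem one_le_mu_card_sub_two [DecidableRel G.Adj] (hn : 5 ≤ Fintype.card V)
    (hdeg : ∀ x, Fintype.card V - 2 ≤ G.degree x) : 1 ≤ mu G (Fintype.card V - 2) := by
  classical
  refine le_mu exists_finset_card_eq_card_sub_two fun S hS ↦ ?_
  obtain ⟨a, b, hab, hSc⟩ := (Finset.card_eq_two (s := Sᶜ)).1 (by rw [Finset.card_compl, hS]; omega)
  have hSab : a ∉ S ∧ b ∉ S := by simp only [← Finset.mem_compl, hSc]; simp
  obtain ⟨T, hT⟩ := exists_isPendantSTree (S := ↑S) hab (by simpa using hSab.1)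
    (by simpa using hSab.2) fun _ _ _ ↦ adj_or_adj_of_forall_card_sub_two_le_degree hdeg
  exact one_le_muLocal hT fun F hF ↦ hF.card_le_card_sub (by omega)

theorem mu_card_sub_two_le_two (hn : 5 ≤ Fintype.card V) : mu G (Fintype.card V - 2) ≤ 2 := by
  obtain ⟨S, hS⟩ := exists_finset_card_eq_card_sub_two (V := V)
  calc mu G (Fintype.card V - 2) ≤ muLocal G S := hS ▸ mu_card_le_muLocal S
    _ ≤ Fintype.card V - S.card := muLocal_le_of_forall fun F hF ↦ hF.card_le_card_sub (by omega)
    _ = 2 := by omega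

theorem mu_card_sub_two_le_one_of_ne_top (hn : 5 ≤ Fintype.card V) (h : G ≠ ⊤) :
    mu G (Fintype.card V - 2) ≤ 1 := by
  classical
  obtain ⟨u, x, hux, hnadj⟩ : ∃ u x, u ≠ x ∧ ¬G.Adj u x := by
    simpa [eq_top_iff_forall_ne_adj] using h
  obtain ⟨S, hxS, hSu, hS⟩ := Finset.exists_subsuperset_card_eq (s := {x})
    (t := Finset.univ.erase u) (n := Fintype.card V - 2) (by simpa using hux.symm) (by simp; omega)
    (by rw [Finset.card_erase_of_mem (Finset.mem_univ u), Finset.card_univ]; omega)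
  have huS : u ∉ S := fun hu ↦ by simpa using hSu hu
  have hsub : G.neighborSet x \ S ⊆ ↑(Sᶜ.erase u) := fun y ⟨hxy, hyS⟩ ↦ by
    simpa [hyS] using fun h : y = u ↦ hnadj (h ▸ hxy).symm
  calc mu G (Fintype.card V - 2) ≤ muLocal G S := hS ▸ mu_card_le_muLocal S
    _ ≤ (G.neighborSet x \ S).ncard := muLocal_le_ncard
        (by rw [Set.encard_coe_eq_coe_finsetCard]; exact_mod_cast (by omega : 2 < S.card))
        (hxS (Finset.mem_singleton_self x))
    _ ≤ (Sᶜ.erase u).card := (Set.ncard_le_ncard hsub).trans_eq (Set.ncard_coe_finset _)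
    _ = 1 := by
      rw [Finset.card_erase_of_mem (Finset.mem_compl.2 huS), Finset.card_compl, hS]; omega

theorem mu_card_sub_two_eq_zero_of_not_connected (hn : 4 ≤ Fintype.card V) (h : ¬G.Connected) :
    mu G (Fintype.card V - 2) = 0 := by
  classical
  obtain ⟨u, v, huv⟩ : ∃ u v, ¬G.Reachable u v := by
    have : Nonempty V := Fintype.card_pos_iff.1 (by omega)
    simpa [connected_iff, Preconnected] using h
  obtain ⟨S, hS₀, -, hS⟩ := Finset.exists_subsuperset_card_eq (Finset.subset_univ {u, v})
    (n := Fintype.card V - 2) (Finset.card_le_two.trans (by omega)) (by simp)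
  refine Nat.le_zero.1 ?_
  calc mu G (Fintype.card V - 2) ≤ muLocal G S := hS ▸ mu_card_le_muLocal S
    _ = 0 := muLocal_eq_zero_of_not_reachable (hS₀ (by simp)) (hS₀ (by simp)) huv

theorem edgeConn_div_le_mu_card_sub_two (hn : 5 ≤ Fintype.card V) :
    edgeConn G / (Fintype.card V - 2) ≤ mu G (Fintype.card V - 2) := by
  classical
  have : Nontrivial V := Fintype.one_lt_card_iff_nontrivial.1 (by omega)
  obtain hlt | hge := lt_or_ge (edgeConn G) (Fintype.card V - 2)
  · simp [Nat.div_eq_of_lt hlt]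
  obtain ⟨v⟩ : Nonempty V := inferInstance
  have hle : edgeConn G ≤ Fintype.card V - 1 :=
    (edgeConn_le_degree v).trans (Nat.le_sub_one_of_lt (G.degree_lt_card_verts v))
  have hdiv : edgeConn G / (Fintype.card V - 2) < 2 :=
    (Nat.div_lt_iff_lt_mul (by omega)).2 (by omega)
  exact (Nat.le_of_lt_succ hdiv).trans
    (one_le_mu_card_sub_two hn fun x ↦ hge.trans (edgeConn_le_degree x))

theorem mu_card_sub_two_le_edgeConn_ceil (hn : 5 ≤ Fintype.card V) :
    mu G (Fintype.card V - 2) ≤ (edgeConn G + (Fintype.card V - 2) - 1) / (Fintype.card V - 2) := by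
  have : Nontrivial V := Fintype.one_lt_card_iff_nontrivial.1 (by omega)
  by_cases hconn : G.Connected
  swap
  · simp [mu_card_sub_two_eq_zero_of_not_connected (by omega) hconn]
  by_cases htop : G = ⊤
  · subst htop
    have := card_sub_one_le_edgeConn_top (V := V)
    exact (mu_card_sub_two_le_two hn).trans ((Nat.le_div_iff_mul_le (by omega)).2 (by omega))
  · have := edgeConn_pos hconn
    exact (mu_card_sub_two_le_one_of_ne_top hn htop).trans
      ((Nat.le_div_iff_mul_le (by omega)).2 (by omega))

end bounds

/-- ⌊λ(G)/(n-2)⌋ ≤ μ_{n-2}(G) ≤ ⌈λ(G)/(n-2)⌉ for n ≥ 5. -/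
theorem mu_card_sub_two_bounds {V : Type*} [Fintype V] (G : SimpleGraph V)
    (hn : 5 ≤ Fintype.card V) :
    edgeConn G / (Fintype.card V - 2) ≤ mu G (Fintype.card V - 2) ∧
    mu G (Fintype.card V - 2) ≤
      (edgeConn G + (Fintype.card V - 2) - 1) / (Fintype.card V - 2) :=
  ⟨edgeConn_div_le_mu_card_sub_two hn, mu_card_sub_two_le_edgeConn_ceil hn⟩
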